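/- Let τ be a continuous distributive triangle function (continuous w.r.t. the Sibley metric) and γ a τ-decomposable measure on a σ-ring Σ continuous from below. For simple non-negative f and a monotone sequence E_n ↗ E in Σ, lim_{n→∞} ∫_{E_n} f dγ = ∫_E f dγ, the limit in the Sibley metric on Δ⁺. -/

import Mathlib

open MeasureTheory Filter Set Topology

noncomputable section

/-- The distribution function of the Dirac measure at 0. -/
def eps0 : ℝ → ℝ := fun x => if 0 < x then 1 else 0

/-- εₐ : the distribution function of the Dirac measure at `a`. -/
def epsAt (a : ℝ) : ℝ → ℝ := fun x => if a < x then 1 else 0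

/-- Distance distribution function: non-decreasing, left-continuous,
vanishing on `(-∞,0]`, with values in `[0,1]` and `sup F = 1`. -/
def IsDDF (F : ℝ → ℝ) : Prop :=
  Monotone F ∧ (∀ x : ℝ, ContinuousWithinAt F (Set.Iio x) x) ∧
  (∀ x ≤ (0:ℝ), F x = 0) ∧ (∀ x, 0 ≤ F x ∧ F x ≤ 1) ∧
  Tendsto F atTop (nhds 1)

/-- Triangle function on Δ⁺: maps Δ⁺ × Δ⁺ into Δ⁺, symmetric, associative,
non-decreasing in each variable, with ε₀ as identity. -/
def IsTriangleFn (τ : (ℝ → ℝ) → (ℝ → ℝ) → (ℝ → ℝ)) : Prop :=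
  (∀ G H, IsDDF G → IsDDF H → IsDDF (τ G H)) ∧
  (∀ G H, τ G H = τ H G) ∧
  (∀ F G H, τ (τ F G) H = τ F (τ G H)) ∧
  (∀ F G H : ℝ → ℝ, F ≤ G → τ F H ≤ τ G H) ∧
  (∀ G, IsDDF G → τ G eps0 = G)

/-- Scalar multiplication `c ⊙ G` on Δ⁺. -/
def smulDDF (c : ℝ) (G : ℝ → ℝ) : ℝ → ℝ := fun x => if c = 0 then eps0 x else G (x / c)

/-- Distributive triangle function: `c ⊙ τ(G,H) = τ(c ⊙ G, c ⊙ H)`. -/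
def IsDistributive (τ : (ℝ → ℝ) → (ℝ → ℝ) → (ℝ → ℝ)) : Prop :=
  ∀ c : ℝ, 0 ≤ c → ∀ G H, smulDDF c (τ G H) = τ (smulDDF c G) (smulDDF c H)

/-- The Sibley (modified Lévy) metric on Δ⁺. -/
def dS (G H : ℝ → ℝ) : ℝ :=
  sInf {h : ℝ | 0 < h ∧ ∀ x ∈ Set.Icc (0:ℝ) (1/h),
    G (x - h) - h ≤ H x ∧ H x ≤ G (x + h) + h}

/-- Iterated τ-sum `⊕_{i} G i` over `Fin n` (empty sum is `ε₀`). -/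
def oplus (τ : (ℝ → ℝ) → (ℝ → ℝ) → (ℝ → ℝ)) : ∀ {n : ℕ}, (Fin n → (ℝ → ℝ)) → (ℝ → ℝ)
  | 0, _ => eps0
  | _ + 1, G => τ (G 0) (oplus τ (fun i => G i.succ))

/-- Partial sums `⊕_{k=0}^{n} G k` of a sequence. -/
def oplusPartial (τ : (ℝ → ℝ) → (ℝ → ℝ) → (ℝ → ℝ)) (G : ℕ → (ℝ → ℝ)) : ℕ → (ℝ → ℝ)
  | 0 => G 0
  | n + 1 => τ (oplusPartial τ G n) (G (n + 1))

/-- A simple non-negative function: finite values on pairwise disjoint measurable sets. -/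
structure SimpleFn (S : Set (Set Ω)) where
  n : ℕ
  c : Fin n → ℝ
  A : Fin n → Set Ω
  hc : ∀ i, 0 ≤ c i
  hA : ∀ i, A i ∈ S
  hdisj : Pairwise (Function.onFun Disjoint A)

def SimpleFn.toFun {Ω : Type*} {S : Set (Set Ω)} (f : SimpleFn S) : Ω → ℝ :=
  fun t => ∑ i, (f.A i).indicator (fun _ => f.c i) t

/-- The γ-integral of a simple function on `E`: `⊕ᵢ xᵢ ⊙ γ_{E∩Eᵢ}`. -/
def SimpleFn.integral {Ω : Type*} {S : Set (Set Ω)} (f : SimpleFn S)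
    (τ : (ℝ → ℝ) → (ℝ → ℝ) → (ℝ → ℝ)) (γ : Set Ω → (ℝ → ℝ)) (E : Set Ω) : ℝ → ℝ :=
  oplus τ (fun i => smulDDF (f.c i) (γ (E ∩ f.A i)))

/-- Left-continuous regularization `𝔊(x) = sup_{x' < x} G(x')`. -/
def lcReg (G : ℝ → ℝ) : ℝ → ℝ := fun x => sSup (G '' Set.Iio x)

/-- `𝔣 ∈ 𝒮_{f,E}` : simple functions below `f` on `E`. -/
def SimpleFn.belowOn {Ω : Type*} {S : Set (Set Ω)} (𝔣 : SimpleFn S)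
    (f : Ω → ENNReal) (E : Set Ω) : Prop :=
  ∀ t ∈ E, ENNReal.ofReal (𝔣.toFun t) ≤ f t

/-- `f` is γ-integrable on `E`: the integrals of simple functions below `f`
are bounded from below by some distance distribution function. -/
def Integrable' {Ω : Type*} {S : Set (Set Ω)}
    (τ : (ℝ → ℝ) → (ℝ → ℝ) → (ℝ → ℝ)) (γ : Set Ω → (ℝ → ℝ))
    (f : Ω → ENNReal) (E : Set Ω) : Prop :=
  ∃ H : ℝ → ℝ, IsDDF H ∧ ∀ 𝔣 : SimpleFn S, 𝔣.belowOn f E → H ≤ 𝔣.integral τ γ E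

/-- The γ-integral `∫_E f dγ` : the infimum in (Δ⁺, ≤) of integrals of simple
functions below `f` on `E` (left-continuous regularization of the pointwise infimum). -/
def probIntegral {Ω : Type*} (S : Set (Set Ω))
    (τ : (ℝ → ℝ) → (ℝ → ℝ) → (ℝ → ℝ)) (γ : Set Ω → (ℝ → ℝ))
    (f : Ω → ENNReal) (E : Set Ω) : ℝ → ℝ :=
  lcReg (fun x => sInf {y | ∃ 𝔣 : SimpleFn S, 𝔣.belowOn f E ∧ 𝔣.integral τ γ E x = y})

open Classical in
/-- The Lebesgue–Stieltjes measure of a monotone function (junk value otherwise). -/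
def lsMeasure (H : ℝ → ℝ) : Measure ℝ :=
  if h : Monotone H then h.stieltjesFunction.measure else 0

/-- Convolution `(G * H)(x) = ∫₀ˣ G(x−t) dH(t)` (Lebesgue–Stieltjes). -/
def conv (G H : ℝ → ℝ) : ℝ → ℝ := fun x =>
  if 0 < x then ∫ t in Set.Icc (0:ℝ) x, G (x - t) ∂(lsMeasure H) else 0

/-- `τ_{L,M}(G,H)(x) = sup_{L(u,v)=x} min(G(u),H(v))`. -/
def tauLM (L : ℝ → ℝ → ℝ) (G H : ℝ → ℝ) : ℝ → ℝ := fun x =>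
  sSup {t | ∃ u v : ℝ, 0 ≤ u ∧ 0 ≤ v ∧ L u v = x ∧ t = min (G u) (H v)}

/-- Pseudo-addition on `[0,∞)`: commutative, associative, jointly strictly
increasing, continuous, with neutral element 0. -/
def IsPseudoAddition (L : ℝ → ℝ → ℝ) : Prop :=
  (∀ u v, 0 ≤ u → 0 ≤ v → L u v = L v u) ∧
  (∀ u v w, 0 ≤ u → 0 ≤ v → 0 ≤ w → L (L u v) w = L u (L v w)) ∧
  (∀ u₁ u₂ v₁ v₂, 0 ≤ u₁ → 0 ≤ v₁ → u₁ < u₂ → v₁ < v₂ → L u₁ v₁ < L u₂ v₂) ∧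
  Continuous (fun p : ℝ × ℝ => L p.1 p.2) ∧
  (∀ u, 0 ≤ u → L 0 u = u ∧ L u 0 = u)

/-- γ is a τ-decomposable measure on the ring S. -/
def IsDecomposable {Ω : Type*} (S : Set (Set Ω))
    (τ : (ℝ → ℝ) → (ℝ → ℝ) → (ℝ → ℝ)) (γ : Set Ω → (ℝ → ℝ)) : Prop :=
  γ ∅ = eps0 ∧ ∀ E F : Set Ω, E ∈ S → F ∈ S → Disjoint E F → γ (E ∪ F) = τ (γ E) (γ F)

/-- γ is continuous from below: `γ_{E_n} → γ_E` weakly (in the Sibley metric)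
whenever `E_n ↗ E`. -/
def ContinuousFromBelow {Ω : Type*} (S : Set (Set Ω)) (γ : Set Ω → (ℝ → ℝ)) : Prop :=
  ∀ E : ℕ → Set Ω, (∀ n, E n ∈ S) → Monotone E → (⋃ n, E n) ∈ S →
    Tendsto (fun n => dS (γ (E n)) (γ (⋃ n, E n))) atTop (nhds 0)

/-- Sequential continuity of a triangle function w.r.t. the Sibley metric. -/
def IsContinuousTriangle (τ : (ℝ → ℝ) → (ℝ → ℝ) → (ℝ → ℝ)) : Prop :=
  ∀ (G H : ℝ → ℝ) (Gn Hn : ℕ → (ℝ → ℝ)), IsDDF G → IsDDF H → (∀ n, IsDDF (Gn n)) →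
    (∀ n, IsDDF (Hn n)) →
    Tendsto (fun n => dS (Gn n) G) atTop (nhds 0) →
    Tendsto (fun n => dS (Hn n) H) atTop (nhds 0) →
    Tendsto (fun n => dS (τ (Gn n) (Hn n)) (τ G H)) atTop (nhds 0)

/-! The integral of a simple function is the finite τ-sum `⊕ᵢ cᵢ ⊙ γ(E ∩ Aᵢ)`. Since
`E_n ∩ Aᵢ ↗ E ∩ Aᵢ`, continuity from below makes each `γ(E_n ∩ Aᵢ)` converge to `γ(E ∩ Aᵢ)`;
scaling by `c` stretches Sibley distances by at most `max 1 (max c c⁻¹)`, and the sequential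
continuity of `τ` carries the limit through the finite τ-sum. -/

def IsSibleyWitness (G H : ℝ → ℝ) (h : ℝ) : Prop :=
  0 < h ∧ ∀ x ∈ Set.Icc (0:ℝ) (1/h), G (x - h) - h ≤ H x ∧ H x ≤ G (x + h) + h

section SibleyMetric

variable {G H : ℝ → ℝ}

lemma dS_eq_sInf (G H : ℝ → ℝ) : dS G H = sInf {h | IsSibleyWitness G H h} := rfl

lemma dS_nonneg (G H : ℝ → ℝ) : 0 ≤ dS G H :=
  Real.sInf_nonneg fun _ hh => hh.1.le

lemma dS_le_of_isSibleyWitness {h : ℝ} (hh : IsSibleyWitness G H h) : dS G H ≤ h :=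
  csInf_le ⟨0, fun _ hh' => hh'.1.le⟩ hh

lemma isSibleyWitness_of_one_lt (hG : ∀ x, 0 ≤ G x ∧ G x ≤ 1) (hH : ∀ x, 0 ≤ H x ∧ H x ≤ 1)
    {h : ℝ} (hh : 1 < h) : IsSibleyWitness G H h := by
  refine ⟨by linarith, fun x _ => ⟨?_, ?_⟩⟩
  · linarith [(hG (x - h)).2, (hH x).1]
  · linarith [(hG (x + h)).1, (hH x).2]

lemma isSibleyWitness_self (hG : Monotone G) {h : ℝ} (hh : 0 < h) : IsSibleyWitness G G h := by
  refine ⟨hh, fun x _ => ⟨?_, ?_⟩⟩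
  · linarith [hG (by linarith : x - h ≤ x)]
  · linarith [hG (by linarith : x ≤ x + h)]

lemma dS_self (hG : Monotone G) : dS G G = 0 :=
  le_antisymm
    (le_of_forall_pos_le_add fun _ hε => by
      simpa using dS_le_of_isSibleyWitness (isSibleyWitness_self hG hε))
    (dS_nonneg G G)

end SibleyMetric

lemma isDDF_eps0 : IsDDF eps0 := by
  refine ⟨fun a b hab => ?_, fun x => ?_, fun x hx => ?_, fun x => ?_, ?_⟩
  · unfold eps0
    split_ifs with ha hb <;> first | exact absurd (ha.trans_le hab) hb | norm_num
  · refine tendsto_const_nhds.congr' ?_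
    rcases le_or_gt x 0 with hx | hx
    · filter_upwards [self_mem_nhdsWithin] with y (hy : y < x)
      simp [eps0, not_lt.mpr hx, not_lt.mpr (hy.le.trans hx)]
    · filter_upwards [mem_nhdsWithin_of_mem_nhds (Ioi_mem_nhds hx)] with y (hy : 0 < y)
      simp [eps0, hx, hy]
  · simp [eps0, not_lt.mpr hx]
  · unfold eps0; split_ifs <;> norm_num
  · refine tendsto_const_nhds.congr' ?_
    filter_upwards [eventually_gt_atTop 0] with y hy
    simp [eps0, hy]

section Scaling

variable {c : ℝ} {G H : ℝ → ℝ}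

lemma smulDDF_zero (G : ℝ → ℝ) : smulDDF 0 G = eps0 := by
  funext x; simp [smulDDF]

lemma smulDDF_of_ne_zero (hc : c ≠ 0) (G : ℝ → ℝ) : smulDDF c G = fun x => G (x / c) := by
  funext x; simp [smulDDF, hc]

lemma isDDF_smulDDF (hc : 0 ≤ c) (hG : IsDDF G) : IsDDF (smulDDF c G) := by
  rcases hc.eq_or_lt with rfl | hc
  · rw [smulDDF_zero]; exact isDDF_eps0
  obtain ⟨hmono, hlc, hzero, hbd, htop⟩ := hG
  rw [smulDDF_of_ne_zero hc.ne']
  refine ⟨fun a b hab => hmono (by gcongr), fun x => ?_,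
    fun x hx => hzero _ (div_nonpos_of_nonpos_of_nonneg hx hc.le), fun x => hbd _,
    htop.comp (tendsto_id.atTop_div_const hc)⟩
  exact (hlc (x / c)).comp (f := fun y => y / c) (continuous_id.div_const c).continuousWithinAt
    fun y (hy : y < x) => show y / c < x / c by gcongr

/-- The factor `max 1 (max c c⁻¹)` bounds both the stretching of the abscissa `x ↦ x / c` and
the shrinking of the window `[0, 1/h]`. -/
lemma IsSibleyWitness.smulDDF (hG : Monotone G) (hc : 0 ≤ c) {h : ℝ}
    (hh : IsSibleyWitness G H h) :
    IsSibleyWitness (smulDDF c G) (smulDDF c H) (max 1 (max c c⁻¹) * h) := by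
  obtain ⟨hpos, hsand⟩ := hh
  set K := max 1 (max c c⁻¹)
  have hK1 : 1 ≤ K := le_max_left _ _
  have hKpos : 0 < K * h := by positivity
  rcases hc.eq_or_lt with rfl | hc
  · simpa only [smulDDF_zero] using isSibleyWitness_self isDDF_eps0.1 hKpos
  have hKc : c ≤ K := (le_max_left _ _).trans (le_max_right _ _)
  have hcK : 1 ≤ c * K := by
    calc (1:ℝ) = c * c⁻¹ := (mul_inv_cancel₀ hc.ne').symm
      _ ≤ c * K := by gcongr; exact (le_max_right _ _).trans (le_max_right _ _)
  have hshift : h ≤ K * h / c := by rw [le_div_iff₀ hc]; nlinarith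
  rw [smulDDF_of_ne_zero hc.ne', smulDDF_of_ne_zero hc.ne']
  refine ⟨hKpos, fun x ⟨hx0, hx1⟩ => ?_⟩
  have hwin : x / c ≤ 1 / h := by
    rw [le_div_iff₀ hKpos] at hx1
    rw [div_le_div_iff₀ hc hpos]
    nlinarith
  obtain ⟨hlow, hupp⟩ := hsand (x / c) ⟨by positivity, hwin⟩
  have hKh : h ≤ K * h := le_mul_of_one_le_left hpos.le hK1
  constructor
  · have := hG (show (x - K * h) / c ≤ x / c - h by rw [sub_div]; linarith)
    linarith
  · have := hG (show x / c + h ≤ (x + K * h) / c by rw [add_div]; linarith)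
    linarith

lemma dS_smulDDF_le (hc : 0 ≤ c) (hG : IsDDF G) (hH : IsDDF H) :
    dS (smulDDF c G) (smulDDF c H) ≤ max 1 (max c c⁻¹) * dS G H := by
  set K := max 1 (max c c⁻¹)
  have hK : 0 < K := one_pos.trans_le (le_max_left _ _)
  have hne : {h | IsSibleyWitness G H h}.Nonempty :=
    ⟨2, isSibleyWitness_of_one_lt hG.2.2.2.1 hH.2.2.2.1 one_lt_two⟩
  rw [← div_le_iff₀' hK, dS_eq_sInf G H]
  refine le_csInf hne fun h hh => ?_
  rw [div_le_iff₀' hK]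
  exact dS_le_of_isSibleyWitness (hh.smulDDF hG.1 hc)

lemma tendsto_dS_smulDDF (hc : 0 ≤ c) {Gn : ℕ → ℝ → ℝ} (hG : IsDDF G) (hGn : ∀ n, IsDDF (Gn n))
    (h : Tendsto (fun n => dS (Gn n) G) atTop (𝓝 0)) :
    Tendsto (fun n => dS (smulDDF c (Gn n)) (smulDDF c G)) atTop (𝓝 0) :=
  squeeze_zero (fun _ => dS_nonneg _ _) (fun n => dS_smulDDF_le hc (hGn n) hG)
    (by simpa using h.const_mul (max 1 (max c c⁻¹)))

end Scaling

section TriangleSum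

variable {τ : (ℝ → ℝ) → (ℝ → ℝ) → (ℝ → ℝ)}

lemma isDDF_oplus (hτ : IsTriangleFn τ) :
    ∀ {n : ℕ} (G : Fin n → ℝ → ℝ), (∀ i, IsDDF (G i)) → IsDDF (oplus τ G)
  | 0, _, _ => isDDF_eps0
  | _ + 1, _, hG => hτ.1 _ _ (hG 0) (isDDF_oplus hτ _ fun i => hG i.succ)

lemma tendsto_dS_oplus (hτ : IsTriangleFn τ) (hct : IsContinuousTriangle τ) :
    ∀ {n : ℕ} (G : Fin n → ℝ → ℝ) (Gs : ℕ → Fin n → ℝ → ℝ),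
      (∀ i, IsDDF (G i)) → (∀ m i, IsDDF (Gs m i)) →
      (∀ i, Tendsto (fun m => dS (Gs m i) (G i)) atTop (𝓝 0)) →
      Tendsto (fun m => dS (oplus τ (Gs m)) (oplus τ G)) atTop (𝓝 0)
  | 0, _, _, _, _, _ => by simpa only [oplus, dS_self isDDF_eps0.1] using tendsto_const_nhds
  | _ + 1, G, Gs, hG, hGs, hlim =>
    hct _ _ _ _ (hG 0) (isDDF_oplus hτ _ fun i => hG i.succ) (fun m => hGs m 0)
      (fun m => isDDF_oplus hτ _ fun i => hGs m i.succ) (hlim 0)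
      (tendsto_dS_oplus hτ hct _ _ (fun i => hG i.succ) (fun m i => hGs m i.succ)
        fun i => hlim i.succ)

end TriangleSum

lemma ContinuousFromBelow.tendsto_dS_inter {Ω : Type*} {S : Set (Set Ω)} {γ : Set Ω → ℝ → ℝ}
    (hcb : ContinuousFromBelow S γ) (hinter : ∀ B ∈ S, ∀ C ∈ S, B ∩ C ∈ S)
    {E : ℕ → Set Ω} (hE : ∀ n, E n ∈ S) (hmono : Monotone E) (hU : (⋃ n, E n) ∈ S)
    {A : Set Ω} (hA : A ∈ S) :
    Tendsto (fun n => dS (γ (E n ∩ A)) (γ ((⋃ k, E k) ∩ A))) atTop (𝓝 0) := by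
  have hUA : (⋃ n, E n ∩ A) = (⋃ k, E k) ∩ A := (Set.iUnion_inter _ _).symm
  have := hcb (fun n => E n ∩ A) (fun n => hinter _ (hE n) _ hA)
    (fun _ _ hmn => Set.inter_subset_inter_left A (hmono hmn)) (hUA ▸ hinter _ hU _ hA)
  rwa [hUA] at this

theorem stmt18_general {Ω : Type*} (S : Set (Set Ω))
    (hdiff : ∀ A B : Set Ω, A ∈ S → B ∈ S → A \ B ∈ S)
    (hiUnion : ∀ f : ℕ → Set Ω, (∀ n, f n ∈ S) → (⋃ n, f n) ∈ S)
    (τ : (ℝ → ℝ) → (ℝ → ℝ) → (ℝ → ℝ)) (hτ : IsTriangleFn τ)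
    (hct : IsContinuousTriangle τ)
    (γ : Set Ω → (ℝ → ℝ)) (hmem : ∀ E ∈ S, IsDDF (γ E))
    (hcb : ContinuousFromBelow S γ)
    (f : SimpleFn S) (E : ℕ → Set Ω) (hE : ∀ n, E n ∈ S) (hmono : Monotone E) :
    Tendsto (fun n => dS (f.integral τ γ (E n)) (f.integral τ γ (⋃ k, E k)))
      atTop (nhds 0) := by
  have hinter : ∀ B ∈ S, ∀ C ∈ S, B ∩ C ∈ S := fun B hB C hC =>
    Set.sdiff_sdiff_right_self B C ▸ hdiff _ _ hB (hdiff _ _ hB hC)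
  have hU : (⋃ k, E k) ∈ S := hiUnion E hE
  have hpiece : ∀ F ∈ S, ∀ i, IsDDF (smulDDF (f.c i) (γ (F ∩ f.A i))) := fun F hF i =>
    isDDF_smulDDF (f.hc i) (hmem _ (hinter _ hF _ (f.hA i)))
  exact tendsto_dS_oplus hτ hct _ _ (hpiece _ hU) (fun n => hpiece _ (hE n)) fun i =>
    tendsto_dS_smulDDF (f.hc i) (hmem _ (hinter _ hU _ (f.hA i)))
      (fun n => hmem _ (hinter _ (hE n) _ (f.hA i)))
      (hcb.tendsto_dS_inter hinter hE hmono hU (f.hA i))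

/-- for a continuous distributive triangle function and a
τ-decomposable measure continuous from below, the integral of a simple function
is continuous along E_n ↗ E (limit in the Sibley metric). -/
theorem stmt18 {Ω : Type*} (S : Set (Set Ω))
    (hempty : (∅ : Set Ω) ∈ S)
    (hdiff : ∀ A B : Set Ω, A ∈ S → B ∈ S → A \ B ∈ S)
    (hiUnion : ∀ f : ℕ → Set Ω, (∀ n, f n ∈ S) → (⋃ n, f n) ∈ S)
    (τ : (ℝ → ℝ) → (ℝ → ℝ) → (ℝ → ℝ)) (hτ : IsTriangleFn τ)
    (hct : IsContinuousTriangle τ) (hd : IsDistributive τ)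
    (γ : Set Ω → (ℝ → ℝ)) (hmem : ∀ E ∈ S, IsDDF (γ E)) (hγ : IsDecomposable S τ γ)
    (hcb : ContinuousFromBelow S γ)
    (f : SimpleFn S) (E : ℕ → Set Ω) (hE : ∀ n, E n ∈ S) (hmono : Monotone E) :
    Tendsto (fun n => dS (f.integral τ γ (E n)) (f.integral τ γ (⋃ k, E k)))
      atTop (nhds 0) :=
  stmt18_general S hdiff hiUnion τ hτ hct γ hmem hcb f E hE hmono

end
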